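/- For every n ∈ ℕ and every n-ary Boolean function f : Bool^n → Bool, there exists an instruction sequence X ∈ IS_br^na in which no forward jump instruction other than #2 occurs, such that X computes f and psize(X) ≤ c·(n·2^n + 1), where c is a constant independent of n and f. -/

import Mathlib

/-- Boolean register names: `inp i` is input register `in:(i+1)`,
`aux i` is auxiliary register `aux:(i+1)`, `out` is the output register. -/
inductive Reg where
  | inp : ℕ → Reg
  | aux : ℕ → Reg
  | out : Reg
deriving DecidableEq

/-- Basic instructions: register reads/writes, and (for splitting instruction
sequences) `split p` and `reply p` for Boolean parameters `p`. -/
inductive BInstr where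
  | get : Reg → BInstr
  | set : Reg → Bool → BInstr
  | split : ℕ → BInstr
  | reply : ℕ → BInstr
deriving DecidableEq

/-- Primitive instructions. -/
inductive PInstr where
  | plain : BInstr → PInstr
  | pos : BInstr → PInstr
  | neg : BInstr → PInstr
  | jump : ℕ → PInstr
  | halt : PInstr
deriving DecidableEq

abbrev RegState := Reg → Bool

/-- State change caused by processing a basic instruction. -/
def BInstr.effect : BInstr → RegState → RegState
  | .set r b, s => Function.update s r b
  | _, s => s

/-- Reply produced by processing a basic instruction. -/
def BInstr.rpl : BInstr → RegState → Bool
  | .get r, s => s r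
  | .set _ b, _ => b
  | _, _ => false

def BInstr.isSplitReply : BInstr → Bool
  | .split _ => true
  | .reply _ => true
  | _ => false

/-- Single-thread execution of an instruction sequence on Boolean registers;
`none` means deadlock, `some s` means termination in register state `s`.
(`split`/`reply` instructions make no sense here and deadlock.) -/
def exec : List PInstr → RegState → Option RegState
  | [], _ => none
  | .plain a :: X, s =>
      if a.isSplitReply then none else exec X (a.effect s)
  | .pos a :: X, s =>
      if a.isSplitReply then none
      else if a.rpl s then exec X (a.effect s) else exec (X.drop 1) (a.effect s)
  | .neg a :: X, s =>
      if a.isSplitReply then none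
      else if a.rpl s then exec (X.drop 1) (a.effect s) else exec X (a.effect s)
  | .jump 0 :: _, _ => none
  | .jump (l+1) :: X, s => exec (X.drop l) s
  | .halt :: _, s => some s
termination_by X _ => X.length
decreasing_by all_goals (simp only [List.length_drop, List.length_cons]; omega)

/-- Initial register state: input registers `in:1 .. in:n` contain
`b 0, ..., b (n-1)`; all other registers contain `false`. -/
def initState (n : ℕ) (b : Fin n → Bool) : RegState := fun r =>
  match r with
  | .inp i => if h : i < n then b ⟨i, h⟩ else false
  | _ => false

/-- `X` computes the `n`-ary Boolean function `f`: for every input, execution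
terminates (does not deadlock) with the output register containing `f b`. -/
def Computes {n : ℕ} (f : (Fin n → Bool) → Bool) (X : List PInstr) : Prop :=
  ∀ b : Fin n → Bool, ∃ s : RegState,
    exec X (initState n b) = some s ∧ s Reg.out = f b

/-- Basic instructions allowed in `IS_br`. -/
def BrBasic : BInstr → Prop
  | .get (.inp _) => True
  | .get (.aux _) => True
  | .set (.aux _) _ => True
  | .set .out _ => True
  | _ => False

/-- Basic instructions allowed in `IS_br^na`. -/
def NaBasic : BInstr → Prop
  | .get (.inp _) => True
  | .set .out _ => True
  | _ => False

def InstrBasicOK (P : BInstr → Prop) : PInstr → Prop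
  | .plain a => P a
  | .pos a => P a
  | .neg a => P a
  | _ => True

/-- Membership of `IS_br` (non-empty, only allowed basic instructions). -/
def ISbr (X : List PInstr) : Prop :=
  X ≠ [] ∧ ∀ u ∈ X, InstrBasicOK BrBasic u

/-- Membership of `IS_br^na`. -/
def ISbrna (X : List PInstr) : Prop :=
  X ≠ [] ∧ ∀ u ∈ X, InstrBasicOK NaBasic u

/-- The primitive instruction contains the basic instruction `out.set:false`. -/
def UsesOutSetFalse : PInstr → Prop
  | .plain (.set .out false) => True
  | .pos (.set .out false) => True
  | .neg (.set .out false) => True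
  | _ => False

/-- The class PLIS of Boolean function families computable by
polynomial-length instruction sequences from `IS_br`. -/
def PLIS (F : (n : ℕ) → (Fin n → Bool) → Bool) : Prop :=
  ∃ h : Polynomial ℕ, ∀ n : ℕ, ∃ X : List PInstr,
    ISbr X ∧ Computes (F n) X ∧ X.length ≤ h.eval n

/-!
Table lookup. For each of the `2 ^ n` input patterns `v` there is a block of `2 * n + 1`
instructions that tests `in:1, …, in:n` against `v` one after the other and finally sets `out`
to `f v`. A mismatching test falls through to a `#2`, which lands on the next `#2` of the block,
so a chain of `#2`s leads just past the block. Only the block of the actual input sets `out`,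
and the blocks followed by `!` therefore compute `f` with `2 ^ n * (2 * n + 1) + 1` instructions.
-/

/-- Skips the next instruction iff input register `in:(i+1)` contains `b`. -/
def testInput (i : ℕ) (b : Bool) : PInstr :=
  if b then .neg (.get (.inp i)) else .pos (.get (.inp i))

def guardedSetOut : List (ℕ × Bool) → Bool → List PInstr
  | [], c => [.plain (.set .out c)]
  | (i, b) :: L, c => testInput i b :: .jump 2 :: guardedSetOut L c

def InputsMatch (s : RegState) (L : List (ℕ × Bool)) : Prop :=
  ∀ p ∈ L, s (.inp p.1) = p.2

instance (s : RegState) (L : List (ℕ × Bool)) : Decidable (InputsMatch s L) :=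
  inferInstanceAs (Decidable (∀ p ∈ L, _))

lemma exec_jump_two_guardedSetOut_append (L : List (ℕ × Bool)) (c : Bool) (Y : List PInstr)
    (s : RegState) :
    exec (.jump 2 :: (guardedSetOut L c ++ Y)) s = exec Y s := by
  induction L with
  | nil => simp [guardedSetOut, exec]
  | cons p L ih => simpa [guardedSetOut, exec] using ih

lemma exec_guardedSetOut_append (L : List (ℕ × Bool)) (c : Bool) (Y : List PInstr)
    (s : RegState) :
    exec (guardedSetOut L c ++ Y) s =
      exec Y (if InputsMatch s L then Function.update s .out c else s) := by
  induction L with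
  | nil =>
    simp [guardedSetOut, exec, BInstr.effect, BInstr.isSplitReply, InputsMatch]
  | cons p L ih =>
    obtain ⟨i, b⟩ := p
    have hmatch : InputsMatch s ((i, b) :: L) ↔ s (.inp i) = b ∧ InputsMatch s L := by
      simp [InputsMatch]
    cases b <;> cases h : s (.inp i) <;>
      simp [guardedSetOut, testInput, exec, BInstr.effect, BInstr.rpl, BInstr.isSplitReply,
        h, hmatch, exec_jump_two_guardedSetOut_append, ih]

lemma length_guardedSetOut (L : List (ℕ × Bool)) (c : Bool) :
    (guardedSetOut L c).length = 2 * L.length + 1 := by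
  induction L with
  | nil => rfl
  | cons p L ih => simp only [guardedSetOut, List.length_cons, ih]; ring

lemma instrBasicOK_of_mem_guardedSetOut {L : List (ℕ × Bool)} {c : Bool} {u : PInstr}
    (hu : u ∈ guardedSetOut L c) : InstrBasicOK NaBasic u := by
  induction L with
  | nil => simp_all [guardedSetOut, InstrBasicOK, NaBasic]
  | cons p L ih =>
    simp only [guardedSetOut, List.mem_cons] at hu
    rcases hu with rfl | rfl | hu
    · unfold testInput; split <;> trivial
    · trivial
    · exact ih hu

lemma eq_two_of_jump_mem_guardedSetOut {L : List (ℕ × Bool)} {c : Bool} {l : ℕ}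
    (hl : .jump l ∈ guardedSetOut L c) : l = 2 := by
  induction L with
  | nil => simp [guardedSetOut] at hl
  | cons p L ih =>
    simp only [guardedSetOut, List.mem_cons, PInstr.jump.injEq] at hl
    rcases hl with h | h | h
    · unfold testInput at h; split at h <;> cases h
    · exact h
    · exact ih h

section LookupTable

variable {n : ℕ}

def patternTests (v : Fin n → Bool) : List (ℕ × Bool) :=
  (List.finRange n).map fun i => (i.1, v i)

lemma length_patternTests (v : Fin n → Bool) : (patternTests v).length = n := by
  simp [patternTests]

lemma inputsMatch_patternTests_iff {s : RegState} {b : Fin n → Bool}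
    (hs : ∀ i : Fin n, s (.inp i) = b i) (v : Fin n → Bool) :
    InputsMatch s (patternTests v) ↔ v = b := by
  simp [InputsMatch, patternTests, hs, funext_iff, eq_comm]

def patternBlock (f : (Fin n → Bool) → Bool) (v : Fin n → Bool) : List PInstr :=
  guardedSetOut (patternTests v) (f v)

lemma exec_flatMap_patternBlock_append (f : (Fin n → Bool) → Bool) {s : RegState}
    {b : Fin n → Bool} (hs : ∀ i : Fin n, s (.inp i) = b i) (vs : List (Fin n → Bool))
    (Y : List PInstr) :
    exec (vs.flatMap (patternBlock f) ++ Y) s =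
      exec Y (if b ∈ vs then Function.update s .out (f b) else s) := by
  induction vs generalizing s with
  | nil => simp
  | cons v vs ih =>
    rw [List.flatMap_cons, List.append_assoc, patternBlock, exec_guardedSetOut_append,
      if_congr (inputsMatch_patternTests_iff hs v) rfl rfl]
    have hs' : ∀ i : Fin n, Function.update s .out (f b) (.inp i) = b i := by
      simpa using hs
    by_cases hv : v = b
    · subst hv
      simp [ih hs']
    · simp [ih hs, hv, Ne.symm hv]

noncomputable def lookupTable (f : (Fin n → Bool) → Bool) : List PInstr :=
  (Finset.univ : Finset (Fin n → Bool)).toList.flatMap (patternBlock f) ++ [.halt]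

lemma computes_lookupTable (f : (Fin n → Bool) → Bool) : Computes f (lookupTable f) := by
  intro b
  have hs : ∀ i : Fin n, initState n b (.inp i) = b i := by simp [initState]
  rw [lookupTable, exec_flatMap_patternBlock_append f hs, if_pos (by simp)]
  exact ⟨_, by rw [exec], Function.update_self _ _ _⟩

lemma length_lookupTable (f : (Fin n → Bool) → Bool) :
    (lookupTable f).length = 2 ^ n * (2 * n + 1) + 1 := by
  simp [lookupTable, patternBlock, length_guardedSetOut, length_patternTests, List.length_flatMap]

lemma isbrna_lookupTable (f : (Fin n → Bool) → Bool) : ISbrna (lookupTable f) := by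
  refine ⟨by simp [lookupTable], fun u hu => ?_⟩
  simp only [lookupTable, List.mem_append, List.mem_flatMap, List.mem_singleton] at hu
  rcases hu with ⟨v, -, hu⟩ | rfl
  · exact instrBasicOK_of_mem_guardedSetOut hu
  · trivial

lemma eq_two_of_jump_mem_lookupTable {f : (Fin n → Bool) → Bool} {l : ℕ}
    (hl : .jump l ∈ lookupTable f) : l = 2 := by
  simp only [lookupTable, List.mem_append, List.mem_flatMap, List.mem_singleton,
    reduceCtorEq, or_false] at hl
  obtain ⟨v, -, hl⟩ := hl
  exact eq_two_of_jump_mem_guardedSetOut hl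

end LookupTable

/-- Theorem 1 of the paper: every `n`-ary Boolean function is computed by an
instruction sequence from `IS_br^na` of length `O(n · 2^n)` containing no
jump instruction other than `#2`. -/
theorem statement0 :
    ∃ c : ℕ, ∀ (n : ℕ) (f : (Fin n → Bool) → Bool),
      ∃ X : List PInstr, ISbrna X ∧
        (∀ l : ℕ, PInstr.jump l ∈ X → l = 2) ∧
        Computes f X ∧ X.length ≤ c * (n * 2 ^ n + 1) := by
  refine ⟨3, fun n f => ⟨lookupTable f, isbrna_lookupTable f,
    fun l => eq_two_of_jump_mem_lookupTable, computes_lookupTable f, ?_⟩⟩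
  have h2pow : 2 ^ n ≤ n * 2 ^ n + 2 := by
    rcases n with _ | n
    · simp
    · nlinarith [Nat.one_le_two_pow (n := n + 1)]
  rw [length_lookupTable]
  nlinarith
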